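/- arXiv:2211.08826 — 3 statements merged into one kernel-verified Lean document; each statement's English description precedes it below -/
import Mathlib

section
/- Suppose the free BGW process is subcritical, i.e. $p_1 + R'(1) < 1$, where $R(v)=\sum_{k\ge2}p_kv^k$. Let $f(v) = \frac{p_0}{1-p_1} + \frac{R(v)}{R'(v)}$ for $v\ge 1$. Then $f(1) > 1$ and $f(v) < v$ for all sufficiently large $v$; hence the equation $f(v)=v$ has a solution $v_c \ge 1$. -/
/-!
Termwise, `R(1) = ∑ p_k ≤ ∑ k p_k = R'(1) < 1 - p_1` and `p_0 + R(1) = 1 - p_1`, so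
`f(1) > (p_0 + R(1)) / (1 - p_1) = 1`. Since every term of `R` has degree at least two,
`2 R(v) ≤ v R'(v)`, hence `f(v) < 1 + v / 2 ≤ v` for `v ≥ 2`. Both series have nonnegative
coefficients and converge everywhere, so `f` is continuous on `[1, 2]` and has a fixed point there.
-/

open Set

section PowerSeries

variable {a : ℕ → ℝ}

theorem continuousOn_Icc_of_hasSum_pow {c : ℕ → ℝ} {m : ℕ → ℕ} {F : ℝ → ℝ}
    (hc : ∀ k, 0 ≤ c k) (hF : ∀ v, HasSum (fun k => c k * v ^ m k) (F v)) (b : ℝ) :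
    ContinuousOn F (Icc 0 b) := by
  have hcont : ContinuousOn (fun v => ∑' k, c k * v ^ m k) (Icc 0 b) := by
    refine continuousOn_tsum (fun k => (continuous_const.mul (continuous_pow _)).continuousOn)
      (hF b).summable fun k v hv => ?_
    rw [Real.norm_eq_abs, abs_of_nonneg (mul_nonneg (hc k) (pow_nonneg hv.1 _))]
    exact mul_le_mul_of_nonneg_left (pow_le_pow_left₀ hv.1 hv.2 _) (hc k)
  exact hcont.congr fun v _ => (hF v).tsum_eq.symm

theorem le_of_hasSum_of_hasSum_deriv (ha : ∀ k, 0 ≤ a k) {v s r' : ℝ} (hv : 1 ≤ v)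
    (hs : HasSum a s) (hr' : HasSum (fun k : ℕ => (k + 2 : ℝ) * a k * v ^ (k + 1)) r') :
    s ≤ r' := by
  refine hasSum_le (fun k => ?_) hs hr'
  calc a k = 1 * a k * 1 := by ring
    _ ≤ (k + 2 : ℝ) * a k * v ^ (k + 1) := by
      have := ha k
      gcongr
      · linarith [k.cast_nonneg (α := ℝ)]
      · exact one_le_pow₀ hv

theorem two_mul_le_mul_of_hasSum_deriv (ha : ∀ k, 0 ≤ a k) {v r r' : ℝ} (hv : 0 ≤ v)
    (hr : HasSum (fun k => a k * v ^ (k + 2)) r)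
    (hr' : HasSum (fun k : ℕ => (k + 2 : ℝ) * a k * v ^ (k + 1)) r') :
    2 * r ≤ v * r' := by
  refine hasSum_le (fun k => ?_) (hr.mul_left 2) (hr'.mul_left v)
  have hterm : 0 ≤ a k * v ^ (k + 2) := mul_nonneg (ha k) (pow_nonneg hv _)
  calc 2 * (a k * v ^ (k + 2)) ≤ (k + 2 : ℝ) * (a k * v ^ (k + 2)) := by
        gcongr; linarith [k.cast_nonneg (α := ℝ)]
    _ = v * ((k + 2 : ℝ) * a k * v ^ (k + 1)) := by ring

end PowerSeries

theorem stmt_6_general (p : ℕ → ℝ) (R R' f : ℝ → ℝ)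
    (hp : ∀ k, 0 ≤ p k) (hsum : HasSum p 1)
    (hp01 : p 0 + p 1 < 1)
    (hR : ∀ v : ℝ, HasSum (fun k : ℕ => p (k + 2) * v ^ (k + 2)) (R v))
    (hR' : ∀ v : ℝ, HasSum (fun k : ℕ => (k + 2 : ℝ) * p (k + 2) * v ^ (k + 1)) (R' v))
    (hsub : p 1 + R' 1 < 1)
    (hf : ∀ v : ℝ, f v = p 0 / (1 - p 1) + R v / R' v) :
    1 < f 1 ∧ (∃ V : ℝ, ∀ v : ℝ, V ≤ v → f v < v) ∧
    ∃ vc : ℝ, 1 ≤ vc ∧ f vc = vc := by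
  have hp' : ∀ k, 0 ≤ p (k + 2) := fun k => hp (k + 2)
  have hq : 0 < 1 - p 1 := by linarith [hp 0]
  have hR1_tail : HasSum (fun k => p (k + 2)) (R 1) := by simpa using hR 1
  have hR1 : R 1 = 1 - (p 0 + p 1) :=
    hR1_tail.unique (by simpa [Finset.sum_range_succ] using (hasSum_nat_add_iff' 2).2 hsum)
  have hR'_pos : ∀ v, 1 ≤ v → 0 < R' v := fun v hv =>
    (show 0 < R 1 by linarith).trans_le (le_of_hasSum_of_hasSum_deriv hp' hv hR1_tail (hR' v))
  have hlarge : ∀ v, 2 ≤ v → f v < v := fun v hv => by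
    have : p 0 / (1 - p 1) < 1 := (div_lt_one hq).2 (by linarith)
    have := two_mul_le_mul_of_hasSum_deriv hp' (by linarith) (hR v) (hR' v)
    have : R v / R' v ≤ v / 2 := by
      rw [div_le_div_iff₀ (hR'_pos v (by linarith)) two_pos]; linarith
    rw [hf v]; linarith
  have hf1 : 1 < f 1 := by
    have : R 1 / (1 - p 1) < R 1 / R' 1 :=
      div_lt_div_of_pos_left (by linarith) (hR'_pos 1 le_rfl) (by linarith)
    have : p 0 / (1 - p 1) + R 1 / (1 - p 1) = 1 := by
      rw [← add_div, hR1, div_eq_one_iff_eq hq.ne']; ring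
    rw [hf 1]; linarith
  have hf_cont : ContinuousOn f (Icc 1 2) := by
    have hsub01 : Icc (1 : ℝ) 2 ⊆ Icc 0 2 := Icc_subset_Icc_left zero_le_one
    have hR_cont := (continuousOn_Icc_of_hasSum_pow hp' hR 2).mono hsub01
    have hR'_cont := (continuousOn_Icc_of_hasSum_pow
      (fun k => mul_nonneg (by positivity) (hp' k)) hR' 2).mono hsub01
    refine (continuousOn_const.add (hR_cont.div hR'_cont fun v hv => ?_)).congr fun v _ => hf v
    exact (hR'_pos v hv.1).ne'
  obtain ⟨vc, hvc, hfix⟩ :=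
    exists_mem_Icc_isFixedPt hf_cont one_le_two hf1.le (hlarge 2 le_rfl).le
  exact ⟨hf1, ⟨2, hlarge⟩, vc, hvc.1, hfix⟩

theorem stmt_6 (p : ℕ → ℝ) (R R' f : ℝ → ℝ)
    (hp : ∀ k, 0 ≤ p k) (hsum : HasSum p 1)
    (hp0 : 0 < p 0) (hp01 : p 0 + p 1 < 1)
    (hR : ∀ v : ℝ, HasSum (fun k : ℕ => p (k + 2) * v ^ (k + 2)) (R v))
    (hR' : ∀ v : ℝ, HasSum (fun k : ℕ => (k + 2 : ℝ) * p (k + 2) * v ^ (k + 1)) (R' v))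
    (hsub : p 1 + R' 1 < 1)
    (hf : ∀ v : ℝ, f v = p 0 / (1 - p 1) + R v / R' v) :
    1 < f 1 ∧ (∃ V : ℝ, ∀ v : ℝ, V ≤ v → f v < v) ∧
    ∃ vc : ℝ, 1 ≤ vc ∧ f vc = vc :=
  stmt_6_general p R R' f hp hsum hp01 hR hR' hsub hf
end

section
/- Let $(z_n)$ be a real sequence with $z_n\to-\infty$ satisfying $z_{n+1} = z_n - g_2 + \frac{g_2^2}{z_n} + O(z_n^{-2})$ for some constant $g_2>0$. Then $z_n = -n g_2 + O(\log n)$ as $n\to\infty$. -/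
/-!
The recursion gives `z (n + 1) - z n = -g₂ + O(1 / z n)`, and `1 / z n → 0`, so the increments
tend to `-g₂` and, by Cesàro, `z n / n → -g₂`. Hence `1 / z n = O(1 / n)`, so the increments of
`z n + n g₂` are `O(1 / n)`, and summing them gives `O(log n)`.
-/

open Filter Asymptotics Finset Real Topology

theorem Asymptotics.IsBigO.sum_range {α : Type*} [NormedAddCommGroup α] {f : ℕ → α} {g : ℕ → ℝ}
    (h : f =O[atTop] g) (hg : 0 ≤ g) (h'g : Tendsto (fun n => ∑ i ∈ range n, g i) atTop atTop) :
    (fun n => ∑ i ∈ range n, f i) =O[atTop] fun n => ∑ i ∈ range n, g i := by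
  obtain ⟨c, hc, hfg⟩ := h.exists_pos
  obtain ⟨N, hN⟩ := eventually_atTop.1 hfg.bound
  have hhead : (fun _ : ℕ => ∑ i ∈ range N, f i) =O[atTop] fun n => ∑ i ∈ range n, g i :=
    (isLittleO_const_left.2 <| .inr <| tendsto_norm_atTop_atTop.comp h'g).isBigO
  have htail : (fun n => ∑ i ∈ Ico N n, f i) =O[atTop] fun n => ∑ i ∈ range n, g i := by
    refine .of_bound c (Eventually.of_forall fun n => ?_)
    calc ‖∑ i ∈ Ico N n, f i‖ ≤ ∑ i ∈ Ico N n, c * g i :=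
          norm_sum_le_of_le _ fun i hi => by
            simpa [abs_of_nonneg (hg i)] using hN i (mem_Ico.1 hi).1
      _ ≤ ∑ i ∈ range n, c * g i :=
          sum_le_sum_of_subset_of_nonneg (fun i hi => mem_range.2 (mem_Ico.1 hi).2)
            fun i _ _ => mul_nonneg hc.le (hg i)
      _ = c * ‖∑ i ∈ range n, g i‖ := by
          rw [← mul_sum, norm_of_nonneg (sum_nonneg fun i _ => hg i)]
  refine (hhead.add htail).congr' ?_ EventuallyEq.rfl
  filter_upwards [eventually_ge_atTop N] with n hn using sum_range_add_sum_Ico f hn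

theorem inv_natCast_le_two_mul_log_add_one_sub_log {n : ℕ} (hn : n ≠ 0) :
    (n : ℝ)⁻¹ ≤ 2 * (log (n + 1) - log n) := by
  have hn' : (1 : ℝ) ≤ n := by exact_mod_cast Nat.one_le_iff_ne_zero.2 hn
  have h := one_sub_inv_le_log_of_pos (x := (n + 1) / n) (by positivity)
  rw [log_div (by positivity) (by positivity), inv_div] at h
  have : (n : ℝ)⁻¹ ≤ 2 * (1 - n / (n + 1)) := by
    field_simp
    linarith
  linarith

theorem isBigO_log_of_sub_isBigO_inv {u : ℕ → ℝ}
    (h : (fun n => u (n + 1) - u n) =O[atTop] fun n : ℕ => (n : ℝ)⁻¹) :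
    u =O[atTop] fun n : ℕ => log n := by
  -- `1 / n` is compared with `log (n + 1) - log n`, whose partial sums telescope to `log n`.
  set g : ℕ → ℝ := fun n => log (n + 1 : ℕ) - log n with hg
  have hg_nonneg : 0 ≤ g := by
    intro n
    rcases n.eq_zero_or_pos with rfl | hn
    · simp [hg]
    · exact sub_nonneg.2 (log_le_log (by positivity) (by push_cast; linarith))
  have hinv : (fun n : ℕ => (n : ℝ)⁻¹) =O[atTop] g := by
    refine .of_bound 2 ?_
    filter_upwards [eventually_ne_atTop 0] with n hn
    rw [norm_of_nonneg (by positivity), norm_of_nonneg (hg_nonneg n)]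
    exact_mod_cast inv_natCast_le_two_mul_log_add_one_sub_log hn
  have hsum_g : ∀ n, ∑ i ∈ range n, g i = log n := fun n =>
    (sum_range_sub (fun i : ℕ => log i) n).trans (by simp)
  have hlog : Tendsto (fun n : ℕ => log n) atTop atTop :=
    tendsto_log_atTop.comp tendsto_natCast_atTop_atTop
  have hsum := (h.trans hinv).sum_range hg_nonneg (by simpa only [hsum_g] using hlog)
  simp only [hsum_g, sum_range_sub (fun i => u i)] at hsum
  have hconst : (fun _ : ℕ => u 0) =O[atTop] fun n : ℕ => log n :=
    (isLittleO_const_left.2 <| .inr <| tendsto_norm_atTop_atTop.comp hlog).isBigO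
  exact (hconst.add hsum).congr_left fun n => by ring

theorem tendsto_div_natCast_of_tendsto_sub {u : ℕ → ℝ} {l : ℝ}
    (h : Tendsto (fun n => u (n + 1) - u n) atTop (𝓝 l)) :
    Tendsto (fun n => u n / n) atTop (𝓝 l) := by
  have hlim := h.cesaro.add ((tendsto_inv_atTop_nhds_zero_nat (𝕜 := ℝ)).const_mul (u 0))
  rw [mul_zero, add_zero] at hlim
  refine hlim.congr fun n => ?_
  rw [sum_range_sub]
  ring

theorem isBigO_sub_mul_log_of_sub_sub_isBigO_inv {z : ℕ → ℝ} {a : ℝ} (ha : a ≠ 0)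
    (hz : Tendsto (fun n => (z n)⁻¹) atTop (𝓝 0))
    (h : (fun n => z (n + 1) - z n - a) =O[atTop] fun n => (z n)⁻¹) :
    (fun n => z n - n * a) =O[atTop] fun n : ℕ => log n := by
  have hdiff : Tendsto (fun n => z (n + 1) - z n) atTop (𝓝 a) := by
    simpa using (h.trans_tendsto hz).add_const a
  have hlin : (fun n : ℕ => (n : ℝ)) =O[atTop] z :=
    isBigO_of_div_tendsto_nhds_of_ne_zero (tendsto_div_natCast_of_tendsto_sub hdiff) ha
  have hinv : (fun n => (z n)⁻¹) =O[atTop] fun n : ℕ => (n : ℝ)⁻¹ :=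
    hlin.inv_rev (eventually_ne_atTop 0 |>.mono fun n hn h0 => absurd (Nat.cast_eq_zero.1 h0) hn)
  refine isBigO_log_of_sub_isBigO_inv ((h.trans hinv).congr_left fun n => ?_)
  push_cast
  ring

theorem exists_pos_forall_abs_le_mul_log_of_isBigO {u : ℕ → ℝ}
    (h : u =O[atTop] fun n : ℕ => log n) :
    ∃ C : ℝ, 0 < C ∧ ∀ n : ℕ, 2 ≤ n → |u n| ≤ C * log n := by
  have hlog_pos : ∀ k : ℕ, 0 < log (k + 2 : ℕ) := fun k => log_pos (by norm_cast; omega)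
  -- `log` vanishes at `0` and `1`, so the finitely many exceptions are handled after a shift by 2.
  have hshift : (fun k => u (k + 2)) =O[cofinite] fun k => log (k + 2 : ℕ) := by
    rw [Nat.cofinite_eq_atTop]
    exact h.comp_tendsto (tendsto_add_atTop_nat 2)
  obtain ⟨C, hC⟩ :=
    (isBigO_cofinite_iff fun k hk => absurd hk (hlog_pos k).ne').1 hshift
  refine ⟨max C 1, by positivity, fun n hn => ?_⟩
  obtain ⟨k, rfl⟩ := Nat.exists_eq_add_of_le' hn
  calc |u (k + 2)| ≤ C * log (k + 2 : ℕ) := by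
        simpa only [norm_eq_abs, abs_of_pos (hlog_pos k)] using hC k
    _ ≤ max C 1 * log (k + 2 : ℕ) :=
        mul_le_mul_of_nonneg_right (le_max_left _ _) (hlog_pos k).le

theorem stmt_11_general (z : ℕ → ℝ) (g₂ : ℝ) (hg₂ : 0 < g₂)
    (htend : Filter.Tendsto z Filter.atTop Filter.atBot)
    (hrec : ∃ C : ℝ, 0 < C ∧ ∀ n : ℕ, 1 ≤ n →
      |z (n + 1) - (z n - g₂ + g₂ ^ 2 / z n)| ≤ C / (z n) ^ 2) :
    ∃ C' : ℝ, 0 < C' ∧ ∀ n : ℕ, 2 ≤ n →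
      |z n + (n : ℝ) * g₂| ≤ C' * Real.log n := by
  obtain ⟨C, -, hrec⟩ := hrec
  have hz : Tendsto (fun n => (z n)⁻¹) atTop (𝓝 0) := tendsto_inv_atBot_zero.comp htend
  have hrem : (fun n => z (n + 1) - (z n - g₂ + g₂ ^ 2 / z n)) =O[atTop]
      fun n => (z n)⁻¹ * (z n)⁻¹ :=
    .of_bound C <| eventually_atTop.2 ⟨1, fun n hn => by
      simpa [norm_eq_abs, div_eq_mul_inv, ← mul_inv, ← sq] using hrec n hn⟩
  have hinv_sq : (fun n => (z n)⁻¹ * (z n)⁻¹) =O[atTop] fun n => (z n)⁻¹ := by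
    simpa using hz.isBigO_one ℝ |>.mul (isBigO_refl (fun n => (z n)⁻¹) atTop)
  have hstep : (fun n => z (n + 1) - z n - -g₂) =O[atTop] fun n => (z n)⁻¹ :=
    ((hrem.trans hinv_sq).add ((isBigO_refl _ _).const_mul_left (g₂ ^ 2))).congr_left
      fun n => by rw [div_eq_mul_inv]; ring
  refine exists_pos_forall_abs_le_mul_log_of_isBigO ?_
  exact (isBigO_sub_mul_log_of_sub_sub_isBigO_inv (neg_ne_zero.2 hg₂.ne') hz hstep).congr_left
    fun n => by ring

theorem stmt_11 (z : ℕ → ℝ) (g₂ : ℝ) (hg₂ : 0 < g₂)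
    (hneg : ∀ n, z n < 0)
    (htend : Filter.Tendsto z Filter.atTop Filter.atBot)
    (hrec : ∃ C : ℝ, 0 < C ∧ ∀ n : ℕ, 1 ≤ n →
      |z (n + 1) - (z n - g₂ + g₂ ^ 2 / z n)| ≤ C / (z n) ^ 2) :
    ∃ C' : ℝ, 0 < C' ∧ ∀ n : ℕ, 2 ≤ n →
      |z n + (n : ℝ) * g₂| ≤ C' * Real.log n :=
  stmt_11_general z g₂ hg₂ htend hrec
end

section
/- Let $(\theta_j)_{j\ge n_0}$ satisfy $\theta_{j+1} = \frac{c}{j} + \lambda_2\theta_j + O\left(\frac{\log j}{j^2}\right)$ with $0<\lambda_2<1$ and $c\in\mathbb{R}$, and $\theta_{n_0}=0$. Then $\theta_j = \frac{c}{j(1-\lambda_2)} + o(1/j)$ as $j\to\infty$. -/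
open Filter Real Topology

set_option maxHeartbeats 1600000 in
theorem stmt_15 (θ : ℕ → ℝ) (c lam₂ : ℝ) (n₀ : ℕ)
    (hlam : 0 < lam₂) (hlam' : lam₂ < 1) (hn₀ : 1 ≤ n₀)
    (hinit : θ n₀ = 0)
    (hrec : ∃ C : ℝ, 0 < C ∧ ∀ j : ℕ, n₀ ≤ j →
      |θ (j + 1) - (c / j + lam₂ * θ j)| ≤ C * Real.log j / (j : ℝ) ^ 2) :
    ∀ ε > (0 : ℝ), ∃ N : ℕ, ∀ j : ℕ, N ≤ j →
      |θ j - c / ((j : ℝ) * (1 - lam₂))| ≤ ε / j := by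
  intro ε hε
  obtain ⟨C, hC, hrec⟩ := hrec
  have h1l : (0:ℝ) < 1 - lam₂ := by linarith
  set K : ℝ := C + |c| / (1 - lam₂) with hKdef
  have hK0 : 0 < K := by
    have h : 0 ≤ |c| / (1 - lam₂) := by positivity
    simp only [hKdef]; linarith
  obtain ⟨N', hN'⟩ := exists_nat_ge (8 / (1 - lam₂))
  set N : ℕ := max (max n₀ 3) N' with hNdef
  have hNn₀ : n₀ ≤ N := le_trans (le_max_left _ _) (le_max_left _ _)
  have hN3 : 3 ≤ N := le_trans (le_max_right _ _) (le_max_left _ _)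
  have hNr : (8 / (1 - lam₂)) ≤ (N:ℝ) := by
    refine le_trans hN' ?_
    exact_mod_cast le_max_right _ _
  set φ : ℕ → ℝ := fun j => θ j - c / ((j:ℝ) * (1 - lam₂)) with hφ
  clear_value K N φ
  have hlog : ∀ j : ℕ, N ≤ j → 1 ≤ Real.log j := by
    intro j hj
    have hj3 : (3:ℝ) ≤ j := by exact_mod_cast le_trans hN3 hj
    rw [Real.le_log_iff_exp_le (by linarith)]
    calc Real.exp 1 ≤ 2.7182818286 := Real.exp_one_lt_d9.le
      _ ≤ (j:ℝ) := by linarith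
  -- Step lemma
  have step : ∀ j : ℕ, N ≤ j →
      |φ (j+1)| ≤ lam₂ * |φ j| + K * Real.log j / (j:ℝ)^2 := by
    intro j hj
    have hj3 : (3:ℝ) ≤ j := by exact_mod_cast le_trans hN3 hj
    have hj0 : (0:ℝ) < j := by linarith
    have hL1 : 1 ≤ Real.log j := hlog j hj
    have hE := hrec j (le_trans hNn₀ hj)
    have hj0' : (j:ℝ) ≠ 0 := ne_of_gt hj0
    have hj1' : (j:ℝ) + 1 ≠ 0 := by positivity
    have h1l' : (1 - lam₂) ≠ 0 := ne_of_gt h1l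
    have key : φ (j+1) = lam₂ * φ j + (θ (j+1) - (c/(j:ℝ) + lam₂ * θ j))
        + c / ((1-lam₂) * j * (j+1)) := by
      simp only [hφ]
      push_cast
      field_simp
      ring
    have hbF : |c / ((1-lam₂) * (j:ℝ) * (j+1))| ≤ |c|/(1-lam₂) * Real.log j / (j:ℝ)^2 := by
      have hdpos : (0:ℝ) < (1-lam₂) * (j:ℝ) * (j+1) := by
        apply mul_pos (mul_pos h1l hj0); linarith
      have h1 : |c / ((1-lam₂) * (j:ℝ) * (j+1))| = |c| / ((1-lam₂) * (j:ℝ) * (j+1)) := by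
        rw [abs_div, abs_of_pos hdpos]
      rw [h1]
      calc |c| / ((1-lam₂) * (j:ℝ) * (j+1)) ≤ |c| / ((1-lam₂) * (j:ℝ) * j) := by
            gcongr; linarith
        _ = |c|/(1-lam₂) / (j:ℝ)^2 := by
            rw [div_div]
            ring_nf
        _ ≤ |c|/(1-lam₂) * Real.log j / (j:ℝ)^2 := by
            gcongr
            exact le_mul_of_one_le_right (by positivity) hL1
    calc |φ (j+1)| ≤ |lam₂ * φ j| + |θ (j+1) - (c/(j:ℝ) + lam₂ * θ j)|
          + |c / ((1-lam₂) * (j:ℝ) * (j+1))| := by rw [key]; exact abs_add_three _ _ _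
      _ ≤ lam₂ * |φ j| + C * Real.log j / (j:ℝ)^2
          + |c|/(1-lam₂) * Real.log j / (j:ℝ)^2 := by
          rw [abs_mul, abs_of_pos hlam]
          gcongr
      _ = lam₂ * |φ j| + K * Real.log j / (j:ℝ)^2 := by rw [hKdef]; ring
  set A : ℝ := 2 * K / (1 - lam₂) with hAdef
  have hA0 : 0 < A := by positivity
  have hKA : 2 * K = A * (1 - lam₂) := by
    rw [hAdef]; field_simp
  set B : ℝ := |φ N| with hBdef
  clear_value A B
  -- Inductive bound
  have ind : ∀ j, N ≤ j →
      |φ j| ≤ B * lam₂^(j-N) + A * (Real.log j)^2/(j:ℝ)^2 := by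
    intro j hj
    induction j, hj using Nat.le_induction with
    | base =>
      have hN0 : (0:ℝ) < N := by
        have : (3:ℝ) ≤ N := by exact_mod_cast hN3
        linarith
      have h0 : 0 ≤ A * (Real.log N)^2/(N:ℝ)^2 := by positivity
      simp only [Nat.sub_self, pow_zero, mul_one]
      linarith
    | succ j hj IH =>
      have hj3 : (3:ℝ) ≤ j := by exact_mod_cast le_trans hN3 hj
      have hj0 : (0:ℝ) < j := by linarith
      have hL1 : 1 ≤ Real.log j := hlog j hj
      have hL0 : 0 ≤ Real.log j := by linarith
      have hj8 : 8 ≤ (1 - lam₂) * j := by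
        have h1 : (N:ℝ) ≤ j := by exact_mod_cast hj
        have h2 : 8 ≤ (1-lam₂) * N := by
          rw [div_le_iff₀ h1l] at hNr; linarith [hNr]
        nlinarith
      have hsub : j + 1 - N = (j - N) + 1 := Nat.succ_sub hj
      set L := Real.log j with hLdef
      have hmid : (lam₂*A*L^2 + K*L) / (j:ℝ)^2 ≤ A*L^2/((j:ℝ)+1)^2 := by
        rw [div_le_div_iff₀ (by positivity) (by positivity)]
        have hL0' : (0:ℝ) ≤ L := by linarith
        have hLL : L ≤ L^2 := by rw [pow_two]; exact le_mul_of_one_le_left hL0' hL1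
        have hKL : K*L ≤ K*L^2 := mul_le_mul_of_nonneg_left hLL hK0.le
        have h2' : 2*(K*L^2) = A*L^2 - lam₂*(A*L^2) := by linear_combination L^2 * hKA
        have h2 : (lam₂*A*L^2 + K*L) * 2 ≤ A*L^2*(1+lam₂) := by linarith
        have h8x : 8*(j:ℝ) ≤ (1-lam₂)*((j:ℝ)*(j:ℝ)) := by
          rw [← mul_assoc]; exact mul_le_mul_of_nonneg_right hj8 hj0.le
        have hy : (1+lam₂)*(2*(j:ℝ)+1) ≤ 2*(2*(j:ℝ)+1) :=
          mul_le_mul_of_nonneg_right (by linarith) (by linarith)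
        have hx : (1+lam₂)*((j:ℝ)+1)^2 ≤ 2*(j:ℝ)^2 := by nlinarith [h8x, hy, hj3]
        have hAL : 0 ≤ A*L^2 := mul_nonneg hA0.le (sq_nonneg L)
        calc (lam₂*A*L^2 + K*L) * ((j:ℝ)+1)^2
            = ((lam₂*A*L^2 + K*L)*2) * ((j:ℝ)+1)^2 / 2 := by ring
          _ ≤ (A*L^2*(1+lam₂)) * ((j:ℝ)+1)^2 / 2 := by gcongr
          _ = (A*L^2) * ((1+lam₂)*((j:ℝ)+1)^2) / 2 := by ring
          _ ≤ (A*L^2) * (2*(j:ℝ)^2) / 2 := by gcongr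
          _ = A*L^2*(j:ℝ)^2 := by ring
      have hlogmono : Real.log j ≤ Real.log (j+1) := by
        apply Real.log_le_log hj0; linarith
      calc |φ (j+1)| ≤ lam₂ * |φ j| + K*L/(j:ℝ)^2 := step j hj
        _ ≤ lam₂ * (B * lam₂^(j-N) + A*L^2/(j:ℝ)^2) + K*L/(j:ℝ)^2 := by
            have := mul_le_mul_of_nonneg_left IH hlam.le
            linarith
        _ = B * lam₂^(j+1-N) + (lam₂*A*L^2 + K*L)/(j:ℝ)^2 := by
            rw [hsub, pow_succ]; ring
        _ ≤ B * lam₂^(j+1-N) + A*L^2/((j:ℝ)+1)^2 := by linarith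
        _ ≤ B * lam₂^(j+1-N) + A*(Real.log (j+1:ℕ))^2/((j+1:ℕ):ℝ)^2 := by
            push_cast
            gcongr
  -- Limits
  have hB0 : 0 ≤ B := by rw [hBdef]; exact abs_nonneg _
  have t1 : Tendsto (fun n : ℕ => ((n:ℝ) + N) * B * lam₂ ^ n) atTop (𝓝 0) := by
    have s1 : Tendsto (fun n : ℕ => (n:ℝ) * lam₂^n) atTop (𝓝 0) := by
      have := (summable_pow_mul_geometric_of_norm_lt_one 1
        (r := lam₂) (by rwa [Real.norm_eq_abs, abs_of_pos hlam])).tendsto_atTop_zero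
      simpa using this
    have s2 : Tendsto (fun n : ℕ => lam₂^n) atTop (𝓝 0) :=
      tendsto_pow_atTop_nhds_zero_of_lt_one hlam.le hlam'
    have := ((s1.mul_const B).add ((s2.mul_const B).const_mul (N:ℝ)))
    simpa using this.congr (fun n => by ring)
  have t1' : Tendsto (fun j : ℕ => (j:ℝ) * (B * lam₂^(j-N))) atTop (𝓝 0) := by
    have comp := t1.comp (tendsto_sub_atTop_nat N)
    apply comp.congr'
    filter_upwards [eventually_ge_atTop N] with j hj
    simp only [Function.comp]
    have hcast : ((j-N:ℕ):ℝ) + N = (j:ℝ) := by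
      rw [← Nat.cast_add, Nat.sub_add_cancel hj]
    rw [hcast]; ring
  have t2 : Tendsto (fun j : ℕ => (j:ℝ) * (A*(Real.log j)^2/(j:ℝ)^2)) atTop (𝓝 0) := by
    have base := (Real.tendsto_pow_log_div_mul_add_atTop 1 0 2 one_ne_zero).comp
      tendsto_natCast_atTop_atTop
    have := base.const_mul A
    simp only [mul_zero] at this
    apply this.congr'
    filter_upwards [eventually_ge_atTop 1] with j hj
    have hj0 : (j:ℝ) ≠ 0 := by
      have : (1:ℝ) ≤ j := by exact_mod_cast hj
      positivity
    simp only [Function.comp]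
    field_simp
    ring
  have tsum : Tendsto (fun j : ℕ => (j:ℝ) * (B * lam₂^(j-N))
      + (j:ℝ) * (A*(Real.log j)^2/(j:ℝ)^2)) atTop (𝓝 0) := by
    simpa using t1'.add t2
  have hev := tsum.eventually_lt_const hε
  obtain ⟨N₂, hN₂⟩ := eventually_atTop.mp (hev.and (eventually_ge_atTop (max N 1)))
  refine ⟨N₂, fun j hj => ?_⟩
  obtain ⟨hlt, hjN1⟩ := hN₂ j hj
  have hjN : N ≤ j := le_trans (le_max_left _ _) hjN1
  have hj1 : 1 ≤ j := le_trans (le_max_right _ _) hjN1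
  have hj0 : (0:ℝ) < j := by exact_mod_cast hj1
  have hφj := ind j hjN
  simp only [hφ] at hφj
  rw [le_div_iff₀ hj0]
  calc |θ j - c / ((j:ℝ) * (1 - lam₂))| * j
      ≤ (B * lam₂^(j-N) + A*(Real.log j)^2/(j:ℝ)^2) * j :=
        mul_le_mul_of_nonneg_right hφj hj0.le
    _ = (j:ℝ) * (B * lam₂^(j-N)) + (j:ℝ) * (A*(Real.log j)^2/(j:ℝ)^2) := by ring
    _ ≤ ε := hlt.le
end
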